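/- arXiv:2101.02682 — 4 statements merged into one kernel-verified Lean document; each statement's English description precedes it below -/
import Mathlib

section
/- Let p be a prime and n, k positive integers with n ≥ kp. Let u_1, ..., u_k, v_1, ..., v_k ∈ {1, ..., n} satisfy u_i ≠ u_j for i ≠ j, v_i ≠ v_j for i ≠ j, and u_i ≠ v_j for i ≠ j. Then there exists a permutation σ of {1, ..., n} with σ(u_i) = v_i for all 1 ≤ i ≤ k and σ^p = identity. -/
/-!
Model σ on `Fin k × ZMod p`: the permutation `c` rotates the fibre `{i} × ZMod p` by `+1` when
`u i ≠ v i` and fixes it otherwise, so `c ^ p = 1`. Since `k * p ≤ n`, there is an embedding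
`F : Fin k × ZMod p ↪ Fin n` with `F (i, 0) = u i`, and `F (i, 1) = v i` whenever `u i ≠ v i`;
the hypotheses on `u` and `v` say exactly that these prescribed values are injective.
Transporting `c` along `F` (and fixing the rest of `Fin n`) gives σ.
-/

open Function Equiv

theorem Set.InjOn.exists_embedding_eqOn {α β : Type*} [Fintype α] [Fintype β]
    (hcard : Fintype.card α ≤ Fintype.card β) {s : Set α} {f : α → β} (hf : s.InjOn f) :
    ∃ F : α ↪ β, s.EqOn F f := by
  classical
  have hs : (s.toFinset.image f).card ≤ Fintype.card α :=
    Finset.card_image_le.trans (Finset.card_le_univ _)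
  obtain ⟨t, hst, -, ht⟩ :=
    Finset.exists_subsuperset_card_eq (Finset.subset_univ _) hs (by simpa using hcard)
  obtain ⟨g, hg⟩ := Set.MapsTo.exists_equiv_extend_of_card_eq ht.symm
    (fun x hx => hst (Finset.mem_image_of_mem f (Set.mem_toFinset.mpr hx))) hf
  exact ⟨g.toEmbedding.trans (Embedding.subtype _), hg⟩

theorem Equiv.prodShear_refl_pow_eq_one {α β : Type*} {f : α → Perm β} {n : ℕ}
    (hf : ∀ a, f a ^ n = 1) : (prodShear (Equiv.refl α) f : Perm (α × β)) ^ n = 1 := by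
  have hpow : ∀ m, (prodShear (Equiv.refl α) f : Perm (α × β)) ^ m =
      prodShear (Equiv.refl α) (f ^ m) := by
    intro m
    induction m with
    | zero => ext <;> rfl
    | succ m ih => rw [pow_succ, ih, pow_succ]; ext <;> rfl
  rw [hpow, show f ^ n = 1 from funext hf]
  ext <;> rfl

theorem injOn_ite_snd_of_injective {ι β T : Type*} [DecidableEq T] {u v : ι → β}
    (hu : Injective u) (hv : Injective v) (huv : ∀ i j, i ≠ j → u i ≠ v j) {a b : T}
    (hab : a ≠ b) :
    Set.InjOn (fun x : ι × T => if x.2 = b then v x.1 else u x.1)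
      {x | x.2 = a ∨ x.2 = b ∧ u x.1 ≠ v x.1} := by
  have hvu : ∀ i j, u j ≠ v j → u i ≠ v j := by
    intro i j hj
    obtain rfl | hij := eq_or_ne i j
    exacts [hj, huv i j hij]
  rintro ⟨i, s⟩ (rfl | ⟨rfl, hi⟩) ⟨j, t⟩ (rfl | ⟨rfl, hj⟩) h <;>
    simp only [hab, if_true, if_false] at h
  · rw [hu h]
  · exact absurd h (hvu i j hj)
  · exact absurd h.symm (hvu j i hi)
  · rw [hv h]

theorem exists_perm_of_order_dvd_prime_mapping_general
    (p : ℕ) (hp : p.Prime) (k n : ℕ) (hn : k * p ≤ n)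
    (u v : Fin k → Fin n)
    (hu : Function.Injective u) (hv : Function.Injective v)
    (huv : ∀ i j : Fin k, i ≠ j → u i ≠ v j) :
    ∃ σ : Equiv.Perm (Fin n), (∀ i, σ (u i) = v i) ∧ σ ^ p = 1 := by
  classical
  have := Fact.mk hp
  let c : Perm (Fin k × ZMod p) :=
    prodShear (Equiv.refl _) fun i => if u i = v i then 1 else Equiv.addRight 1
  have hc : c ^ p = 1 := prodShear_refl_pow_eq_one fun i => by split_ifs <;> simp
  obtain ⟨F, hF⟩ := (injOn_ite_snd_of_injective hu hv huv
    (zero_ne_one (α := ZMod p))).exists_embedding_eqOn (by simpa using hn)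
  refine ⟨c.viaEmbedding F, fun i => ?_, ?_⟩
  · have hFu : F (i, 0) = u i := by simpa using @hF (i, 0) (Or.inl rfl)
    rw [← hFu, Perm.viaEmbedding_apply]
    by_cases h : u i = v i
    · simp [c, h, hFu]
    · simpa [c, h] using @hF (i, 1) (Or.inr ⟨rfl, h⟩)
  · rw [← Perm.viaEmbeddingHom_apply, ← map_pow, hc, map_one]

theorem exists_perm_of_order_dvd_prime_mapping
    (p : ℕ) (hp : p.Prime) (k n : ℕ) (hk : 0 < k) (hn : k * p ≤ n)
    (u v : Fin k → Fin n)
    (hu : Function.Injective u) (hv : Function.Injective v)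
    (huv : ∀ i j : Fin k, i ≠ j → u i ≠ v j) :
    ∃ σ : Equiv.Perm (Fin n), (∀ i, σ (u i) = v i) ∧ σ ^ p = 1 :=
  exists_perm_of_order_dvd_prime_mapping_general p hp k n hn u v hu hv huv
end

section
/- Every permutation in the symmetric group S_n can be written as a product στ where σ has order dividing 2 and τ has order dividing 3. -/
/-!
Factorisations `π = σ * τ` with `σ ^ 2 = 1`, `τ ^ 3 = 1` and both factors supported in the
support of `π` multiply over disjoint permutations, so it suffices to factor cycles. A
transposition is its own factorisation, and cycles of length `3` and `5` are factored by hand.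
If `(h ⋯) = σ * τ` with `σ h = h`, then inserting three new points gives
`(a b c h ⋯) = (σ * (a h)) * ((a b c) * τ)`, whose involution fixes `b`; rotating the cycle to
start at `b`, the step can be repeated, and it reaches every length other than `2`.
-/

open Equiv List

namespace Equiv.Perm

variable {α : Type*} [DecidableEq α] [Fintype α]

def TwoThreeSplit (π : Perm α) (s t : Finset α) : Prop :=
  ∃ σ τ : Perm α, σ ^ 2 = 1 ∧ τ ^ 3 = 1 ∧ π = σ * τ ∧ σ.support ⊆ s ∧ τ.support ⊆ t

theorem twoThreeSplit_one (s t : Finset α) : TwoThreeSplit 1 s t :=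
  ⟨1, 1, one_pow 2, one_pow 3, (one_mul 1).symm, by simp, by simp⟩

theorem TwoThreeSplit.mono {π : Perm α} {s t s' t' : Finset α} (h : π.TwoThreeSplit s t)
    (hs : s ⊆ s') (ht : t ⊆ t') : π.TwoThreeSplit s' t' :=
  let ⟨σ, τ, hσ, hτ, hπ, hσs, hτt⟩ := h
  ⟨σ, τ, hσ, hτ, hπ, hσs.trans hs, hτt.trans ht⟩

theorem disjoint_of_support_subset {f g : Perm α} {s t : Finset α} (hf : f.support ⊆ s)
    (hg : g.support ⊆ t) (hst : _root_.Disjoint s t) : f.Disjoint g :=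
  disjoint_iff_disjoint_support.mpr (hst.mono hf hg)

theorem TwoThreeSplit.mul {f g : Perm α} {s₁ t₁ s₂ t₂ : Finset α} (hf : f.TwoThreeSplit s₁ t₁)
    (hg : g.TwoThreeSplit s₂ t₂) (hs : _root_.Disjoint s₁ s₂) (ht : _root_.Disjoint t₁ t₂)
    (hts : _root_.Disjoint t₁ s₂) : (f * g).TwoThreeSplit (s₁ ∪ s₂) (t₁ ∪ t₂) := by
  obtain ⟨σ₁, τ₁, hσ₁, hτ₁, rfl, hσs₁, hτt₁⟩ := hf
  obtain ⟨σ₂, τ₂, hσ₂, hτ₂, rfl, hσs₂, hτt₂⟩ := hg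
  have hσσ := (disjoint_of_support_subset hσs₁ hσs₂ hs).commute
  have hττ := (disjoint_of_support_subset hτt₁ hτt₂ ht).commute
  have hτσ := (disjoint_of_support_subset hτt₁ hσs₂ hts).commute
  refine ⟨σ₁ * σ₂, τ₁ * τ₂, ?_, ?_, ?_, ?_, ?_⟩
  · rw [hσσ.mul_pow, hσ₁, hσ₂, mul_one]
  · rw [hττ.mul_pow, hτ₁, hτ₂, mul_one]
  · rw [mul_assoc, ← mul_assoc τ₁, hτσ.eq, mul_assoc, mul_assoc]
  · exact (support_mul_le _ _).trans (Finset.union_subset_union hσs₁ hσs₂)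
  · exact (support_mul_le _ _).trans (Finset.union_subset_union hτt₁ hτt₂)

end Equiv.Perm

namespace List

open Equiv.Perm

variable {α : Type*} [DecidableEq α]

theorem formPerm_cons_cons_cons_cons {a b c h : α} (t : List α) (hah : a ≠ h) (hbh : b ≠ h)
    (hch : c ≠ h) :
    formPerm (a :: b :: c :: h :: t) =
      Equiv.swap a h * formPerm [a, b, c] * formPerm (h :: t) := by
  have hg : formPerm [a, b, c] = Equiv.swap a b * Equiv.swap b c := by
    simp [formPerm_cons_cons]
  have hgc : formPerm [a, b, c] c = a := by simp [hg]
  have hgh : formPerm [a, b, c] h = h := by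
    simp [hg, swap_apply_of_ne_of_ne hbh.symm hch.symm, swap_apply_of_ne_of_ne hah.symm hbh.symm]
  have key := swap_apply_apply (formPerm [a, b, c]) c h
  rw [hgc, hgh] at key
  rw [key, inv_mul_cancel_right, hg]
  simp only [formPerm_cons_cons, mul_assoc]

variable [Fintype α]

theorem twoThreeSplit_formPerm_cons_cons_cons_cons {a b c h : α} {t : List α}
    (hnd : (a :: b :: c :: h :: t).Nodup)
    (H : (formPerm (h :: t)).TwoThreeSplit t.toFinset (h :: t).toFinset) :
    (formPerm (a :: b :: c :: h :: t)).TwoThreeSplit (insert a (h :: t).toFinset)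
      (a :: b :: c :: h :: t).toFinset := by
  obtain ⟨σ, τ, hσ, hτ, hπ, hσs, hτt⟩ := H
  simp only [nodup_cons, mem_cons, not_or] at hnd
  obtain ⟨⟨hab, hac, hah, hat⟩, ⟨hbc, hbh, hbt⟩, ⟨hch, hct⟩, hht, -⟩ := hnd
  set g := formPerm [a, b, c]
  have hg3 : g ^ 3 = 1 := formPerm_pow_length_eq_one_of_nodup _ (by simp [hab, hac, hbc])
  have hg : g.support ⊆ [a, b, c].toFinset := support_formPerm_le _
  have hgσ := (disjoint_of_support_subset hg hσs (by aesop)).commute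
  have hgτ := (disjoint_of_support_subset hg hτt (by aesop)).commute
  have hsσ := (disjoint_of_support_subset (support_swap hah).subset hσs (by aesop)).commute
  refine ⟨σ * Equiv.swap a h, g * τ, ?_, ?_, ?_, ?_, ?_⟩
  · rw [hsσ.symm.mul_pow, hσ, sq, swap_mul_self, one_mul]
  · rw [hgτ.mul_pow, hτ, hg3, one_mul]
  · rw [formPerm_cons_cons_cons_cons t hah hbh hch, hπ]
    calc Equiv.swap a h * g * (σ * τ) = Equiv.swap a h * (g * σ) * τ := by simp only [mul_assoc]
      _ = σ * Equiv.swap a h * (g * τ) := by rw [hgσ.eq, ← mul_assoc, hsσ.eq]; simp only [mul_assoc]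
  · refine (support_mul_le _ _).trans (Finset.union_subset (hσs.trans ?_) ?_)
    · intro x; aesop
    · rw [support_swap hah]; intro x; aesop
  · refine (support_mul_le _ _).trans (Finset.union_subset (hg.trans ?_) (hτt.trans ?_)) <;>
      intro x <;> aesop

theorem twoThreeSplit_formPerm_cons_cons_cons_append {a b c h : α} {t : List α}
    (hnd : (b :: c :: h :: (t ++ [a])).Nodup)
    (H : (formPerm (h :: t)).TwoThreeSplit t.toFinset (h :: t).toFinset) :
    (formPerm (b :: c :: h :: (t ++ [a]))).TwoThreeSplit (c :: h :: (t ++ [a])).toFinset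
      (b :: c :: h :: (t ++ [a])).toFinset := by
  have hrot : (a :: b :: c :: h :: t) ~r (b :: c :: h :: (t ++ [a])) := by
    simpa using isRotated_append (l := [a]) (l' := b :: c :: h :: t)
  have hnd' := hrot.nodup_iff.mpr hnd
  rw [← formPerm_eq_of_isRotated hnd' hrot]
  refine (twoThreeSplit_formPerm_cons_cons_cons_cons hnd' H).mono ?_ ?_ <;>
    intro x <;> aesop

theorem twoThreeSplit_formPerm_five {v w x y z : α} (hnd : [v, w, x, y, z].Nodup) :
    (formPerm [v, w, x, y, z]).TwoThreeSplit [w, x, y, z].toFinset [v, w, x, y, z].toFinset := by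
  simp only [nodup_cons, mem_cons, not_or] at hnd
  obtain ⟨⟨hvw, hvx, hvy, hvz, -⟩, ⟨hwx, hwy, hwz, -⟩, ⟨hxy, hxz, -⟩, ⟨hyz, -⟩, -⟩ := hnd
  have hd := (disjoint_of_support_subset (support_swap hwx).subset (support_swap hyz).subset
    (by aesop)).commute
  refine ⟨Equiv.swap w x * Equiv.swap y z, formPerm [v, x, z], ?_, ?_, ?_, ?_, ?_⟩
  · rw [hd.mul_pow, sq, sq, swap_mul_self, swap_mul_self, one_mul]
  · exact formPerm_pow_length_eq_one_of_nodup _ (by simp [*])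
  · ext i
    simp only [formPerm_cons_cons, formPerm_singleton, Perm.mul_apply, mul_one, swap_apply_def]
    grind
  · refine (support_mul_le _ _).trans ?_
    rw [support_swap hwx, support_swap hyz]
    intro i; aesop
  · refine (support_formPerm_le _).trans ?_
    intro i; aesop

/-- The involution avoids the head `d`, so that three points can be inserted in front of it. -/
theorem twoThreeSplit_formPerm_cons (d : α) (r : List α) (hnd : (d :: r).Nodup)
    (hr : r.length ≠ 1) : (formPerm (d :: r)).TwoThreeSplit r.toFinset (d :: r).toFinset := by
  induction hn : r.length using Nat.strong_induction_on generalizing d r with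
  | _ n ih =>
  rcases r with _ | ⟨c, _ | ⟨h, s⟩⟩
  · simpa using twoThreeSplit_one _ _
  · simp at hr
  rcases s.eq_nil_or_concat' with rfl | ⟨t, a, rfl⟩
  · exact ⟨1, formPerm [d, c, h], one_pow 2, formPerm_pow_length_eq_one_of_nodup _ hnd,
      (one_mul _).symm, by simp, support_formPerm_le _⟩
  by_cases ht : t.length = 1
  · obtain ⟨x, rfl⟩ := length_eq_one_iff.mp ht
    exact twoThreeSplit_formPerm_five hnd
  refine twoThreeSplit_formPerm_cons_cons_cons_append hnd (ih t.length ?_ h t ?_ ht rfl)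
  · rw [← hn, length_cons, length_cons, length_append, length_singleton]; omega
  · exact hnd.sublist (((sublist_append_left t [a]).cons_cons h).cons c |>.cons d)

theorem twoThreeSplit_formPerm {l : List α} (hl : l.Nodup) (h2 : l.length ≠ 2) :
    (formPerm l).TwoThreeSplit l.toFinset l.toFinset := by
  cases l with
  | nil => simpa using twoThreeSplit_one _ _
  | cons d r =>
    exact (twoThreeSplit_formPerm_cons d r hl (by simpa using h2)).mono (by simp) subset_rfl

end List

namespace Equiv.Perm

variable {α : Type*} [DecidableEq α] [Fintype α]

theorem IsCycle.twoThreeSplit_support {c : Perm α} (hc : c.IsCycle) :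
    c.TwoThreeSplit c.support c.support := by
  by_cases h2 : c.support.card = 2
  · refine ⟨c, 1, ?_, one_pow 3, (mul_one c).symm, subset_rfl, by simp⟩
    rw [← h2, ← hc.orderOf, pow_orderOf_eq_one]
  obtain ⟨x, hx⟩ := hc.nonempty_support
  have hl : formPerm (toList c x) = c := by
    rw [formPerm_toList, hc.cycleOf_eq (mem_support.mp hx)]
  have hsupp : (toList c x).toFinset = c.support := by
    rw [← support_formPerm_of_nodup _ (nodup_toList c x) (toList_ne_singleton _ _), hl]
  have hlen : (toList c x).length ≠ 2 := by
    rwa [length_toList, hc.cycleOf_eq (mem_support.mp hx)]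
  simpa only [hl, hsupp] using twoThreeSplit_formPerm (nodup_toList c x) hlen

theorem twoThreeSplit_support (π : Perm α) : π.TwoThreeSplit π.support π.support := by
  induction π using cycle_induction_on with
  | base_one => exact twoThreeSplit_one _ _
  | base_cycles c hc => exact hc.twoThreeSplit_support
  | induction_disjoint f g hfg _ hf hg =>
    have hd := disjoint_iff_disjoint_support.mp hfg
    rw [hfg.support_mul]
    exact hf.mul hg hd hd hd

theorem exists_sq_eq_one_cube_eq_one_mul (π : Perm α) :
    ∃ σ τ : Perm α, σ ^ 2 = 1 ∧ τ ^ 3 = 1 ∧ π = σ * τ :=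
  let ⟨σ, τ, hσ, hτ, hπ, _⟩ := twoThreeSplit_support π
  ⟨σ, τ, hσ, hτ, hπ⟩

end Equiv.Perm

theorem perm_eq_prod_order_two_and_order_three (n : ℕ) (π : Equiv.Perm (Fin n)) :
    ∃ σ τ : Equiv.Perm (Fin n), σ ^ 2 = 1 ∧ τ ^ 3 = 1 ∧ π = σ * τ :=
  π.exists_sq_eq_one_cube_eq_one_mul
end

section
/- For every k ≥ 1, every cycle of odd length 4k−1 or 4k+1 in a symmetric group can be written as a product of two permutations each of order dividing 3. -/
open Equiv Equiv.Perm List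

variable {α : Type*} [DecidableEq α]

lemma my_splice (l1 l2 : List α) (y : α) :
    formPerm (l1 ++ [y]) * formPerm (y :: l2) = formPerm (l1 ++ y :: l2) := by
  induction l1 with
  | nil => simp
  | cons x t ih =>
    cases t with
    | nil => simp [formPerm_cons_cons, formPerm_pair]
    | cons x' t' =>
      simp only [cons_append] at ih ⊢
      rw [formPerm_cons_cons, mul_assoc, ih, ← formPerm_cons_cons]

lemma my_fp3 (u v w : α) : formPerm [u, v, w] = swap u v * swap v w := by
  simp [List.formPerm]

lemma my_conj3 (τ : Perm α) (a b c : α) :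
    formPerm [a, b, c] * τ = τ * formPerm [τ⁻¹ a, τ⁻¹ b, τ⁻¹ c] := by
  rw [my_fp3, my_fp3, mul_assoc, swap_mul_eq_mul_swap τ b c, ← mul_assoc,
    swap_mul_eq_mul_swap τ a b, mul_assoc]

lemma my_cube3 {a b c : α} (h : ([a, b, c] : List α).Nodup) :
    formPerm [a, b, c] ^ 3 = 1 := by
  have h3 : (3 : ℕ) = ([a, b, c] : List α).length := rfl
  rw [h3]
  exact formPerm_pow_length_eq_one_of_nodup _ h

lemma my_disj (σ : Perm α) (l : List α) (h : ∀ y ∈ l, σ y = y) :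
    Perm.Disjoint σ (formPerm l) := by
  intro y
  by_cases hy : y ∈ l
  · exact Or.inl (h y hy)
  · exact Or.inr (formPerm_apply_of_notMem hy)

omit [DecidableEq α] in
lemma my_mul_cube {σ c : Perm α} (h : Perm.Disjoint σ c) (hσ : σ ^ 3 = 1) (hc : c ^ 3 = 1) :
    (σ * c) ^ 3 = 1 := by
  rw [h.commute.mul_pow, hσ, hc, one_mul]

lemma my_fix3 {u v w x : α} (h1 : x ≠ u) (h2 : x ≠ v) (h3 : x ≠ w) :
    formPerm [u, v, w] x = x :=
  formPerm_apply_of_notMem (by simp [h1, h2, h3])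

lemma my_core (j : ℕ) : ∀ (g : List α), g.Nodup → (g.length = 4*j+5 ∨ g.length = 4*j+7) →
    ∃ (σ τ : Perm α) (L : List α) (e : α),
      σ ^ 3 = 1 ∧ τ ^ 3 = 1 ∧ σ * τ = formPerm L ∧ L.Perm g ∧
      (∀ x ∉ g, σ x = x) ∧ (∀ x ∉ g, τ x = x) ∧
      e ∈ g ∧ σ e = e ∧ τ⁻¹ e ∈ L := by
  induction j with
  | zero =>
    intro g hnd hlen
    rcases hlen with h5 | h7
    · obtain ⟨a1, a2, a3, a4, a5, rfl⟩ : ∃ b1 b2 b3 b4 b5, g = [b1, b2, b3, b4, b5] := by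
        rcases g with _|⟨a1,_|⟨a2,_|⟨a3,_|⟨a4,_|⟨a5,_|⟨a6,t⟩⟩⟩⟩⟩⟩ <;>
          simp only [length_cons, length_nil] at h5 <;> first | omega | exact ⟨_,_,_,_,_,rfl⟩
      simp only [List.nodup_cons, List.mem_cons, List.mem_singleton, not_or,
        List.not_mem_nil, List.nodup_nil, and_true, not_false_iff] at hnd
      obtain ⟨⟨h12, h13, h14, h15⟩, ⟨h23, h24, h25⟩, ⟨h34, h35⟩, h45⟩ := hnd
      refine ⟨formPerm [a1,a2,a3], formPerm [a3,a4,a5], [a1,a2,a3,a4,a5], a5,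
        ?_, ?_, ?_, .refl _, ?_, ?_, by simp, ?_, ?_⟩
      · exact my_cube3 (by simp [h12, h13, h23])
      · exact my_cube3 (by simp [h34, h35, h45])
      · exact my_splice [a1,a2] [a4,a5] a3
      · intro x hx
        exact formPerm_apply_of_notMem (by simp at hx ⊢; tauto)
      · intro x hx
        exact formPerm_apply_of_notMem (by simp at hx ⊢; tauto)
      · exact formPerm_apply_of_notMem
          (by simp only [List.mem_cons, List.not_mem_nil, or_false, not_or]
              exact ⟨fun h => h15 h.symm, fun h => h25 h.symm, fun h => h35 h.symm⟩)
      · have ht : formPerm [a3,a4,a5] a4 = a5 := by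
          rw [my_fp3, mul_apply, swap_apply_left,
            swap_apply_of_ne_of_ne (fun h => h35 h.symm) (fun h => h45 h.symm)]
        have hinv : (formPerm [a3,a4,a5])⁻¹ a5 = a4 := by
          rw [Equiv.Perm.inv_eq_iff_eq]; exact ht.symm
        rw [hinv]; simp
    · obtain ⟨a1, a2, a3, a4, a5, a6, a7, rfl⟩ :
          ∃ b1 b2 b3 b4 b5 b6 b7, g = [b1, b2, b3, b4, b5, b6, b7] := by
        rcases g with _|⟨a1,_|⟨a2,_|⟨a3,_|⟨a4,_|⟨a5,_|⟨a6,_|⟨a7,_|⟨a8,t⟩⟩⟩⟩⟩⟩⟩⟩ <;>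
          simp only [length_cons, length_nil] at h7 <;> first | omega | exact ⟨_,_,_,_,_,_,_,rfl⟩
      simp only [List.nodup_cons, List.mem_cons, List.mem_singleton, not_or,
        List.not_mem_nil, List.nodup_nil, and_true, not_false_iff] at hnd
      obtain ⟨⟨h12, h13, h14, h15, h16, h17⟩, ⟨h23, h24, h25, h26, h27⟩,
        ⟨h34, h35, h36, h37⟩, ⟨h45, h46, h47⟩, ⟨h56, h57⟩, h67⟩ := hnd
      have hmul : formPerm [a1,a2,a3] * formPerm [a5,a6,a7] * formPerm [a3,a4,a5]
          = formPerm [a1,a2,a3,a4,a6,a7,a5] := by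
        have r1 : formPerm ([a6,a7] ++ [a5]) = formPerm [a5,a6,a7] :=
          formPerm_rotate_one [a5,a6,a7] (by simp [h56, h57, h67])
        have r2 : formPerm (a5 :: [a3,a4]) = formPerm [a3,a4,a5] := by
          have := formPerm_rotate [a3,a4,a5] (by simp [h34, h35, h45]) 2
          exact this
        have r3 : formPerm [a6,a7,a5,a3,a4] = formPerm (a3 :: [a4,a6,a7,a5]) := by
          have h65 : ¬ a6 = a5 := fun h => h56 h.symm
          have h75 : ¬ a7 = a5 := fun h => h57 h.symm
          have := formPerm_rotate [a3,a4,a6,a7,a5]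
            (by simp [h34, h36, h37, h35, h46, h47, h45, h67, h65, h75]) 2
          have hr : ([a3,a4,a6,a7,a5] : List α).rotate 2 = [a6,a7,a5,a3,a4] := rfl
          rw [hr] at this
          exact this
        rw [mul_assoc, ← r1, ← r2, my_splice [a6,a7] [a3,a4] a5]
        simp only [List.cons_append, List.nil_append]
        rw [r3]
        exact my_splice [a1,a2] [a4,a6,a7,a5] a3
      refine ⟨formPerm [a1,a2,a3] * formPerm [a5,a6,a7], formPerm [a3,a4,a5],
        [a1,a2,a3,a4,a6,a7,a5], a4, ?_, ?_, hmul, ?_, ?_, ?_, by simp, ?_, ?_⟩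
      · exact my_mul_cube
          (my_disj _ _ (by
            intro y hy
            simp only [List.mem_cons, List.not_mem_nil, or_false] at hy
            rcases hy with rfl | rfl | rfl
            · exact my_fix3 (fun h => h15 h.symm) (fun h => h25 h.symm) (fun h => h35 h.symm)
            · exact my_fix3 (fun h => h16 h.symm) (fun h => h26 h.symm) (fun h => h36 h.symm)
            · exact my_fix3 (fun h => h17 h.symm) (fun h => h27 h.symm) (fun h => h37 h.symm)))
          (my_cube3 (by simp [h12, h13, h23])) (my_cube3 (by simp [h56, h57, h67]))
      · exact my_cube3 (by simp [h34, h35, h45])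
      · exact List.Perm.append_left [a1,a2,a3,a4] (List.perm_append_comm (l₁ := [a6,a7]) (l₂ := [a5]))
      · intro x hx
        simp only [List.mem_cons, List.not_mem_nil, or_false, not_or] at hx
        obtain ⟨e1, e2, e3, e4, e5, e6, e7⟩ := hx
        rw [mul_apply, my_fix3 e5 e6 e7, my_fix3 e1 e2 e3]
      · intro x hx
        simp only [List.mem_cons, List.not_mem_nil, or_false, not_or] at hx
        obtain ⟨e1, e2, e3, e4, e5, e6, e7⟩ := hx
        exact my_fix3 e3 e4 e5
      · rw [mul_apply, my_fix3 h45 h46 h47,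
          my_fix3 (fun h => h14 h.symm) (fun h => h24 h.symm) (fun h => h34 h.symm)]
      · have ht : formPerm [a3,a4,a5] a3 = a4 := by
          rw [my_fp3, mul_apply, swap_apply_of_ne_of_ne h34 h35, swap_apply_left]
        have hinv : (formPerm [a3,a4,a5])⁻¹ a4 = a3 := by
          rw [Equiv.Perm.inv_eq_iff_eq]; exact ht.symm
        rw [hinv]; simp
  | succ j ih =>
    intro g hnd hlen
    obtain ⟨w, x, y, z, g', rfl⟩ : ∃ w x y z g', g = w :: x :: y :: z :: g' := by
      rcases g with _|⟨w,_|⟨x,_|⟨y,_|⟨z,t⟩⟩⟩⟩ <;>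
        simp only [length_cons, length_nil] at hlen <;>
        first | omega | exact ⟨_,_,_,_,_,rfl⟩
    have hlen' : g'.length = 4*j+5 ∨ g'.length = 4*j+7 := by
      simp only [length_cons] at hlen; omega
    simp only [List.nodup_cons, List.mem_cons, not_or] at hnd
    obtain ⟨⟨hwx, hwy, hwz, hwg⟩, ⟨hxy, hxz, hxg⟩, ⟨hyz, hyg⟩, hzg, hnd'⟩ := hnd
    obtain ⟨σ, τ, L, e, hσ3, hτ3, hστ, hLg, hσfix, hτfix, heg, hσe, hbL⟩ := ih g' hnd' hlen'
    -- basic facts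
    have hew : e ≠ w := fun h => hwg (h ▸ heg)
    have hex : e ≠ x := fun h => hxg (h ▸ heg)
    have hey : e ≠ y := fun h => hyg (h ▸ heg)
    have hez : e ≠ z := fun h => hzg (h ▸ heg)
    have hτw : τ w = w := hτfix w hwg
    have hτx : τ x = x := hτfix x hxg
    have hτy : τ y = y := hτfix y hyg
    have hτz : τ z = z := hτfix z hzg
    have hτiw : τ⁻¹ w = w := by rw [Equiv.Perm.inv_eq_iff_eq]; exact hτw.symm
    have hτix : τ⁻¹ x = x := by rw [Equiv.Perm.inv_eq_iff_eq]; exact hτx.symm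
    have hτiz : τ⁻¹ z = z := by rw [Equiv.Perm.inv_eq_iff_eq]; exact hτz.symm
    have hLnd : L.Nodup := hLg.nodup_iff.mpr hnd'
    obtain ⟨L1, L2, hL⟩ := List.append_of_mem hbL
    -- rotation of L
    have hrot1 : L ~r (τ⁻¹ e :: L2) ++ L1 := hL ▸ List.isRotated_append (l := L1)
    have hrot2 : (τ⁻¹ e :: (L2 ++ L1)) ~r (L2 ++ L1) ++ [τ⁻¹ e] :=
      List.isRotated_append (l := [τ⁻¹ e]) (l' := L2 ++ L1)
    have hrot : L ~r (L2 ++ L1) ++ [τ⁻¹ e] := by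
      refine hrot1.trans ?_
      simpa using hrot2
    have hfpL : formPerm L = formPerm ((L2 ++ L1) ++ [τ⁻¹ e]) :=
      formPerm_eq_of_isRotated hLnd hrot
    refine ⟨σ * formPerm [e, w, x], τ * formPerm [x, y, z],
      (L2 ++ L1) ++ τ⁻¹ e :: [w, x, y, z], z, ?_, ?_, ?_, ?_, ?_, ?_, by simp, ?_, ?_⟩
    · refine my_mul_cube (my_disj _ _ ?_) hσ3 (my_cube3 (by simp [hew, hex, hwx]))
      intro u hu
      simp only [List.mem_cons, List.not_mem_nil, or_false] at hu
      rcases hu with rfl | rfl | rfl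
      · exact hσe
      · exact hσfix u hwg
      · exact hσfix u hxg
    · refine my_mul_cube (my_disj _ _ ?_) hτ3 (my_cube3 (by simp [hxy, hxz, hyz]))
      intro u hu
      simp only [List.mem_cons, List.not_mem_nil, or_false] at hu
      rcases hu with rfl | rfl | rfl
      · exact hτx
      · exact hτy
      · exact hτz
    · -- product identity
      have step1 : formPerm [e, w, x] * τ = τ * formPerm [τ⁻¹ e, w, x] := by
        rw [my_conj3, hτiw, hτix]
      calc σ * formPerm [e, w, x] * (τ * formPerm [x, y, z])
          = σ * (formPerm [e, w, x] * τ) * formPerm [x, y, z] := by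
            simp only [mul_assoc]
        _ = σ * τ * (formPerm [τ⁻¹ e, w, x] * formPerm [x, y, z]) := by
            rw [step1]; simp only [mul_assoc]
        _ = formPerm L * formPerm [τ⁻¹ e, w, x, y, z] := by
            have sp1 : formPerm [τ⁻¹ e, w, x] * formPerm [x, y, z]
                = formPerm [τ⁻¹ e, w, x, y, z] := my_splice [τ⁻¹ e, w] [y, z] x
            rw [hστ, sp1]
        _ = formPerm ((L2 ++ L1) ++ [τ⁻¹ e]) * formPerm (τ⁻¹ e :: [w, x, y, z]) := by
            rw [hfpL]
        _ = formPerm ((L2 ++ L1) ++ τ⁻¹ e :: [w, x, y, z]) :=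
            my_splice (L2 ++ L1) [w, x, y, z] (τ⁻¹ e)
    · -- permutation property
      have p1 : (L2 ++ L1) ++ [τ⁻¹ e] ~ L := hrot.perm.symm
      calc (L2 ++ L1) ++ τ⁻¹ e :: [w, x, y, z]
          ~ ((L2 ++ L1) ++ [τ⁻¹ e]) ++ [w, x, y, z] := by
            simp [List.append_assoc]
        _ ~ L ++ [w, x, y, z] := p1.append_right _
        _ ~ g' ++ [w, x, y, z] := hLg.append_right _
        _ ~ [w, x, y, z] ++ g' := List.perm_append_comm
        _ ~ w :: x :: y :: z :: g' := by simp
    · intro u hu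
      simp only [List.mem_cons, not_or] at hu
      obtain ⟨huw, hux, huy, huz, hug⟩ := hu
      have hue : u ≠ e := fun h => hug (h ▸ heg)
      rw [mul_apply, my_fix3 hue huw hux, hσfix u hug]
    · intro u hu
      simp only [List.mem_cons, not_or] at hu
      obtain ⟨huw, hux, huy, huz, hug⟩ := hu
      rw [mul_apply, my_fix3 hux huy huz, hτfix u hug]
    · rw [mul_apply, my_fix3 (Ne.symm hez) (Ne.symm hwz) (Ne.symm hxz), hσfix z hzg]
    · have hd : formPerm [x, y, z] y = z := by
        rw [my_fp3, mul_apply, swap_apply_left,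
          swap_apply_of_ne_of_ne (Ne.symm hxz) (Ne.symm hyz)]
      have : (τ * formPerm [x, y, z])⁻¹ z = y := by
        rw [mul_inv_rev, mul_apply, hτiz, Equiv.Perm.inv_eq_iff_eq]
        exact hd.symm
      rw [this]
      simp

theorem odd_cycle_eq_prod_two_order_three
    (n k : ℕ) (hk : 1 ≤ k) (π : Equiv.Perm (Fin n)) (hc : π.IsCycle)
    (hlen : π.support.card = 4 * k - 1 ∨ π.support.card = 4 * k + 1) :
    ∃ σ τ : Equiv.Perm (Fin n), σ ^ 3 = 1 ∧ τ ^ 3 = 1 ∧ π = σ * τ := by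
  by_cases h3 : π.support.card = 3
  · refine ⟨π, 1, ?_, one_pow 3, by simp⟩
    rw [← h3, ← hc.orderOf]
    exact pow_orderOf_eq_one π
  · obtain ⟨j, hj⟩ : ∃ j, π.support.card = 4 * j + 5 ∨ π.support.card = 4 * j + 7 := by
      rcases hlen with h | h
      · exact ⟨k - 2, Or.inr (by omega)⟩
      · exact ⟨k - 1, Or.inl (by omega)⟩
    set g := π.support.toList with hg
    have hnodup : g.Nodup := π.support.nodup_toList
    have hglen : g.length = π.support.card := π.support.length_toList
    obtain ⟨σ₀, τ₀, L, e, h1, h2, hprod, hP, -, -, -, -, -⟩ :=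
      my_core j g hnodup (by rw [hglen]; exact hj)
    have hPlen : L.length = g.length := hP.length_eq
    have hLnd : L.Nodup := hP.nodup_iff.mpr hnodup
    have hm2 : 2 ≤ L.length := by rw [hPlen, hglen]; omega
    have hcy : (List.formPerm L).IsCycle := List.isCycle_formPerm hLnd hm2
    have hsupp : (List.formPerm L).support = L.toFinset :=
      List.support_formPerm_of_nodup L hLnd (by
        intro a ha
        rw [ha] at hPlen
        simp only [List.length_cons, List.length_nil] at hPlen
        omega)
    have hcards : (List.formPerm L).support.card = π.support.card := by
      rw [hsupp, List.toFinset_card_of_nodup hLnd, hPlen, hglen]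
    obtain ⟨c, hcc⟩ := isConj_iff.mp (hcy.isConj hc hcards)
    have key : ∀ a : Equiv.Perm (Fin n), (c * a * c⁻¹) ^ 3 = c * a ^ 3 * c⁻¹ := by
      intro a
      simp [pow_succ, mul_assoc, inv_mul_cancel_left]
    refine ⟨c * σ₀ * c⁻¹, c * τ₀ * c⁻¹, ?_, ?_, ?_⟩
    · rw [key, h1, mul_one, mul_inv_cancel]
    · rw [key, h2, mul_one, mul_inv_cancel]
    · rw [← hcc, ← hprod]
      simp [mul_assoc, inv_mul_cancel_left]
end

section
/- If p ≥ 5 is a prime with p ≡ 3 (mod 4), then the product of any two conjugacy classes of involutions in PSL_2(p) contains no element of order p. -/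
/-- The projective special linear group `PSL₂(p)`. -/
abbrev PSL2 (p : ℕ) :=
  Matrix.SpecialLinearGroup (Fin 2) (ZMod p) ⧸
    Subgroup.center (Matrix.SpecialLinearGroup (Fin 2) (ZMod p))

/-!
Lift `x` and `y` to `A, B ∈ SL₂(𝔽_p)`. By Cayley–Hamilton `A² = tr(A) • A - 1`, so `x² = 1` with
`x ≠ 1` (`A²` scalar, `A` not) forces `tr A = 0`; likewise `tr B = 0`. If `xy` had order `p`, then
`(AB)^p = r • 1` with `r = ±1`, and `(r • AB)^p = 1` makes `r • AB - 1` nilpotent, so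
`tr(r • AB) = 2`. For `A' = r • A` the traceless matrix `N = A' + B` then has
`det N = 2 - tr(A'B) = 0` and `tr(A'N) = 0`. As `-1` is not a square mod `p`, the determinant has
no nonzero zero among the traceless matrices trace-orthogonal to `A'`; hence `N = 0`, `B = -A'`
and `A'B = -A'² = 1`, so `xy = 1`.
-/

open Matrix

theorem eq_zero_of_sq_add_sq_eq_zero {K : Type*} [Field K] (hK : ¬IsSquare (-1 : K)) {x y : K}
    (h : x ^ 2 + y ^ 2 = 0) : y = 0 := by
  by_contra hy
  exact hK ⟨x / y, by field_simp; linear_combination -h⟩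

namespace Matrix

section CommRing

variable {R : Type*} [CommRing R]

theorem sq_eq_trace_smul_sub_det_smul_fin_two [Nontrivial R] (A : Matrix (Fin 2) (Fin 2) R) :
    A ^ 2 = A.trace • A - A.det • 1 := by
  have h := aeval_self_charpoly A
  simp only [charpoly_fin_two, map_add, map_sub, map_mul, map_pow, Polynomial.aeval_X,
    Polynomial.aeval_C, Algebra.algebraMap_eq_smul_one, smul_mul_assoc, one_mul] at h
  linear_combination (norm := module) h

theorem det_add_fin_two (A B : Matrix (Fin 2) (Fin 2) R) :
    (A + B).det = A.det + B.det + A.trace * B.trace - (A * B).trace := by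
  simp only [det_fin_two, trace_fin_two, add_apply, mul_apply, Fin.sum_univ_two]
  ring

theorem mul_apply_one_zero_sq_add_eq_zero {A N : Matrix (Fin 2) (Fin 2) R}
    (hA : A.trace = 0) (hN : N.trace = 0) :
    (A * N) 1 0 ^ 2 + N 1 0 ^ 2 * A.det + A 1 0 ^ 2 * N.det + A 1 0 * N 1 0 * (A * N).trace
      = 0 := by
  rw [trace_fin_two, add_eq_zero_iff_eq_neg'] at hA hN
  simp only [det_fin_two, trace_fin_two, mul_apply, Fin.sum_univ_two, hA, hN]
  ring

theorem trace_eq_card_of_pow_eq_one [IsReduced R] {n : Type*} [Fintype n] [DecidableEq n]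
    [Nonempty n] (p : ℕ) [Fact p.Prime] [CharP R p] {C : Matrix n n R} (hC : C ^ p = 1) :
    C.trace = Fintype.card n := by
  have hnil : IsNilpotent (C - 1) :=
    ⟨p, by rw [sub_pow_char_of_commute p (Commute.one_right C), hC, one_pow, sub_self]⟩
  have h := (isNilpotent_trace_of_isNilpotent hnil).eq_zero
  rwa [trace_sub, trace_one, sub_eq_zero] at h

end CommRing

section Field

variable {K : Type*} [Field K]

theorem eq_zero_of_det_eq_zero_of_trace_mul_eq_zero (hK : ¬IsSquare (-1 : K))
    {A N : Matrix (Fin 2) (Fin 2) K} (hA : A.trace = 0) (hAdet : A.det = 1)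
    (hN : N.trace = 0) (hNdet : N.det = 0) (hAN : (A * N).trace = 0) : N = 0 := by
  have h10 : N 1 0 = 0 := eq_zero_of_sq_add_sq_eq_zero hK (x := (A * N) 1 0) <| by
    simpa [hAdet, hNdet, hAN] using mul_apply_one_zero_sq_add_eq_zero hA hN
  have h01 : N 0 1 = 0 := eq_zero_of_sq_add_sq_eq_zero hK (x := (Aᵀ * Nᵀ) 1 0) <| by
    simpa [hAdet, hNdet, ← transpose_mul, trace_mul_comm N A, hAN] using
      mul_apply_one_zero_sq_add_eq_zero (A := Aᵀ) (N := Nᵀ) (by rwa [trace_transpose])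
        (by rwa [trace_transpose])
  rw [trace_fin_two, add_eq_zero_iff_eq_neg'] at hN
  have h00 : N 0 0 = 0 := by
    rw [det_fin_two, hN, h10] at hNdet
    exact pow_eq_zero_iff two_ne_zero |>.mp (by linear_combination -hNdet)
  ext i j
  fin_cases i <;> fin_cases j <;> simp [h00, h01, h10, hN]

theorem mul_eq_one_of_trace_mul_eq_two (hK : ¬IsSquare (-1 : K))
    {A B : Matrix (Fin 2) (Fin 2) K} (hA : A.trace = 0) (hAdet : A.det = 1)
    (hB : B.trace = 0) (hBdet : B.det = 1) (hAB : (A * B).trace = 2) : A * B = 1 := by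
  have hA2 : A * A = -1 := by
    simpa [hA, hAdet, sq] using sq_eq_trace_smul_sub_det_smul_fin_two A
  have hsum : A + B = 0 := by
    refine eq_zero_of_det_eq_zero_of_trace_mul_eq_zero hK hA hAdet ?_ ?_ ?_
    · rw [trace_add, hA, hB, add_zero]
    · rw [det_add_fin_two, hA, hAdet, hBdet, hAB]; ring
    · rw [mul_add, trace_add, hA2, hAB, trace_neg, trace_one]; simp
  rw [← neg_eq_of_add_eq_zero_right hsum, mul_neg, hA2, neg_neg]

end Field

end Matrix

namespace Matrix.SpecialLinearGroup

variable {K : Type*} [Field K]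

theorem trace_eq_zero_of_sq_mem_center {G : SpecialLinearGroup (Fin 2) K}
    (hG2 : G ^ 2 ∈ Subgroup.center (SpecialLinearGroup (Fin 2) K))
    (hG : G ∉ Subgroup.center (SpecialLinearGroup (Fin 2) K)) :
    (G : Matrix (Fin 2) (Fin 2) K).trace = 0 := by
  obtain ⟨r, -, hr⟩ := mem_center_iff.mp hG2
  have hCH := sq_eq_trace_smul_sub_det_smul_fin_two (G : Matrix (Fin 2) (Fin 2) K)
  rw [G.2, ← coe_pow, ← hr, one_smul, eq_sub_iff_add_eq] at hCH
  set t := (G : Matrix (Fin 2) (Fin 2) K).trace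
  by_contra ht
  have hscalar : scalar (Fin 2) (t⁻¹ * (r + 1)) = G := by
    rw [← inv_smul_eq_iff₀ ht] at hCH
    rw [← hCH, scalar_apply, scalar_apply, ← smul_one_eq_diagonal, ← smul_one_eq_diagonal,
      mul_smul, add_smul, one_smul]
  refine hG (mem_center_iff.mpr ⟨_, ?_, hscalar⟩)
  have hdet := G.2
  rwa [← hscalar, scalar_apply, det_diagonal, Finset.prod_const, Finset.card_univ] at hdet

end Matrix.SpecialLinearGroup

namespace QuotientGroup

variable {G : Type*} [Group G] {N : Subgroup G} [N.Normal]

theorem pow_orderOf_mk_mem (g : G) : g ^ orderOf (g : G ⧸ N) ∈ N := by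
  rw [← eq_one_iff, mk_pow, pow_orderOf_eq_one]

theorem notMem_of_orderOf_mk_ne_one {g : G} (h : orderOf (g : G ⧸ N) ≠ 1) : g ∉ N := fun hg ↦
  h (by rw [(eq_one_iff g).mpr hg, orderOf_one])

end QuotientGroup

open Matrix.SpecialLinearGroup QuotientGroup

theorem product_of_involutions_not_order_p_general
    (p : ℕ) (hp : p.Prime) (h4 : p % 4 = 3)
    (x y : PSL2 p) (hx : orderOf x = 2) (hy : orderOf y = 2) :
    orderOf (x * y) ≠ p := by
  intro hxy
  have := Fact.mk hp
  have hK : ¬IsSquare (-1 : ZMod p) := fun h ↦ ZMod.exists_sq_eq_neg_one_iff.mp h h4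
  obtain ⟨A, rfl⟩ := mk_surjective x
  obtain ⟨B, rfl⟩ := mk_surjective y
  have hA := trace_eq_zero_of_sq_mem_center (hx ▸ pow_orderOf_mk_mem A)
    (notMem_of_orderOf_mk_ne_one (by omega))
  have hB := trace_eq_zero_of_sq_mem_center (hy ▸ pow_orderOf_mk_mem B)
    (notMem_of_orderOf_mk_ne_one (by omega))
  obtain ⟨r, hr_card, hr⟩ := mem_center_iff.mp (hxy ▸ pow_orderOf_mk_mem (A * B))
  have hr2 : r ^ 2 = 1 := by rwa [Fintype.card_fin] at hr_card
  have hrA : (r • (A : Matrix (Fin 2) (Fin 2) (ZMod p))).det = 1 := by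
    rw [det_smul, A.2, mul_one, hr_card]
  have hpow : (r • (A : Matrix (Fin 2) (Fin 2) (ZMod p)) * B) ^ p = 1 := by
    rw [smul_mul_assoc, smul_pow, ZMod.pow_card, ← coe_mul, ← coe_pow, ← hr, scalar_apply,
      ← smul_one_eq_diagonal, smul_smul, ← sq, hr2, one_smul]
  have hAB := mul_eq_one_of_trace_mul_eq_two hK (by simp [hA]) hrA hB B.2
    (by simpa using trace_eq_card_of_pow_eq_one p hpow)
  have hAB_scalar : scalar (Fin 2) r = (A * B : SpecialLinearGroup (Fin 2) (ZMod p)) := by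
    rw [scalar_apply, ← smul_one_eq_diagonal, ← hAB, smul_mul_assoc, smul_smul, ← sq, hr2,
      one_smul, coe_mul]
  exact notMem_of_orderOf_mk_ne_one (by rw [mk_mul, hxy]; exact hp.ne_one)
    (mem_center_iff.mpr ⟨r, hr_card, hAB_scalar⟩)

theorem product_of_involutions_not_order_p
    (p : ℕ) (hp : p.Prime) (h5 : 5 ≤ p) (h4 : p % 4 = 3)
    (x y : PSL2 p) (hx : orderOf x = 2) (hy : orderOf y = 2) :
    orderOf (x * y) ≠ p :=
  product_of_involutions_not_order_p_general p hp h4 x y hx hy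
end
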